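/- arXiv:2308.15201 — 5 statements merged into one kernel-verified Lean document; each statement's English description precedes it below -/
import Mathlib

section
/- For t₁ + t₂ + t₃ = 1, the three formal partial derivatives of Σ(t₁,t₂,t₃) = Σᵢ tᵢ³(10 − 15tᵢ + 6tᵢ²) + 30(t₁²t₂²t₃ + t₂²t₃²t₁ + t₃²t₁²t₂) are all equal: ∂Σ/∂t₁ = ∂Σ/∂t₂ = ∂Σ/∂t₃ on the simplex {t₁+t₂+t₃=1}. -/
/-!
The first partial derivative of Σ is `30 t₁²(1 - t₁)² + 30 t₂²t₃² + 60 t₁t₂t₃(t₂ + t₃)`.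
On the simplex `1 - t₁ = t₂ + t₃`, and this becomes the perfect square
`30 (t₁t₂ + t₂t₃ + t₃t₁)²`, which is symmetric. Since Σ itself is symmetric, the other two
partial derivatives are the same expression with the variables permuted, hence equal.
-/

/-- The polynomial Σ(t₁,t₂,t₃) = Σᵢ tᵢ³(10−15tᵢ+6tᵢ²) + 30(t₁²t₂²t₃ + t₂²t₃²t₁ + t₃²t₁²t₂). -/
noncomputable def SigmaPoly (t₁ t₂ t₃ : ℝ) : ℝ :=
  t₁ ^ 3 * (10 - 15 * t₁ + 6 * t₁ ^ 2) + t₂ ^ 3 * (10 - 15 * t₂ + 6 * t₂ ^ 2) +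
    t₃ ^ 3 * (10 - 15 * t₃ + 6 * t₃ ^ 2) +
    30 * (t₁ ^ 2 * t₂ ^ 2 * t₃ + t₂ ^ 2 * t₃ ^ 2 * t₁ + t₃ ^ 2 * t₁ ^ 2 * t₂)

lemma hasDerivAt_smootherstep (x : ℝ) :
    HasDerivAt (fun s : ℝ => s ^ 3 * (10 - 15 * s + 6 * s ^ 2)) (30 * x ^ 2 * (1 - x) ^ 2) x := by
  refine ((hasDerivAt_pow 3 x).fun_mul
    ((((hasDerivAt_id x).const_mul 15).const_sub 10).fun_add
      ((hasDerivAt_pow 2 x).const_mul 6))).congr_deriv ?_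
  simp only [id_eq]
  ring

namespace SigmaPoly

lemma swap (a b c : ℝ) : SigmaPoly a b c = SigmaPoly b a c := by
  unfold SigmaPoly; ring

lemma rotate (a b c : ℝ) : SigmaPoly a b c = SigmaPoly c a b := by
  unfold SigmaPoly; ring

lemma hasDerivAt_fst (a b c : ℝ) :
    HasDerivAt (fun s => SigmaPoly s b c)
      (30 * a ^ 2 * (1 - a) ^ 2 + 30 * b ^ 2 * c ^ 2 + 60 * a * b * c * (b + c)) a := by
  have cross : HasDerivAt (fun s : ℝ => 30 * ((b ^ 2 * c + c ^ 2 * b) * s ^ 2 + b ^ 2 * c ^ 2 * s))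
      (30 * ((b ^ 2 * c + c ^ 2 * b) * (2 * a) + b ^ 2 * c ^ 2)) a := by
    simpa using (((hasDerivAt_pow 2 a).const_mul (b ^ 2 * c + c ^ 2 * b)).add
      ((hasDerivAt_id a).const_mul (b ^ 2 * c ^ 2))).const_mul 30
  have split : (fun s => SigmaPoly s b c) = fun s =>
      (s ^ 3 * (10 - 15 * s + 6 * s ^ 2) + (SigmaPoly 0 b c)) +
        30 * ((b ^ 2 * c + c ^ 2 * b) * s ^ 2 + b ^ 2 * c ^ 2 * s) := by
    funext s; unfold SigmaPoly; ring
  rw [split]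
  exact (((hasDerivAt_smootherstep a).add_const _).add cross).congr_deriv (by ring)

lemma deriv_fst_of_add_eq_one {a b c : ℝ} (h : a + b + c = 1) :
    deriv (fun s => SigmaPoly s b c) a = 30 * (a * b + b * c + c * a) ^ 2 := by
  rw [(hasDerivAt_fst a b c).deriv, show 1 - a = b + c by linarith]
  ring

end SigmaPoly

/-- On the simplex t₁+t₂+t₃ = 1 the three partial derivatives of Σ coincide. -/
theorem stmt6 (t₁ t₂ t₃ : ℝ) (h : t₁ + t₂ + t₃ = 1) :
    deriv (fun s => SigmaPoly s t₂ t₃) t₁ = deriv (fun s => SigmaPoly t₁ s t₃) t₂ ∧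
    deriv (fun s => SigmaPoly t₁ s t₃) t₂ = deriv (fun s => SigmaPoly t₁ t₂ s) t₃ := by
  have h₁ := SigmaPoly.deriv_fst_of_add_eq_one h
  have h₂ : deriv (fun s => SigmaPoly t₁ s t₃) t₂ = 30 * (t₂ * t₁ + t₁ * t₃ + t₃ * t₂) ^ 2 := by
    simp only [SigmaPoly.swap t₁]
    exact SigmaPoly.deriv_fst_of_add_eq_one (by linarith)
  have h₃ : deriv (fun s => SigmaPoly t₁ t₂ s) t₃ = 30 * (t₃ * t₁ + t₁ * t₂ + t₂ * t₃) ^ 2 := by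
    simp only [SigmaPoly.rotate t₁ t₂]
    exact SigmaPoly.deriv_fst_of_add_eq_one (by linarith)
  rw [h₁, h₂, h₃]
  constructor <;> ring
end

section
/- Let p₁,p₂,p₃ be affinely independent in ℝ² with barycentric gradients G₁,G₂,G₃. For any α₁,α₂,α₃ ∈ ℝ there exist u₁,u₂,u₃ ∈ ℝ² such that Gₙuₙ = 1 for all n and the matrix [Gᵢuⱼ/Gⱼuⱼ] equals [[1, −1−α₂, α₃],[α₁, 1, −1−α₃],[−1−α₁, α₂, 1]]; in particular u₁ = p₁ − ½(p₂+p₃) + (½+α₁)(p₂−p₃), and cyclically, works. -/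
/-- The 2×2 determinant det[u,v]. -/
def det2 (u v : Fin 2 → ℝ) : ℝ := u 0 * v 1 - u 1 * v 0

/-- Barycentric weight λᵢ of the triangle with vertices p 0, p 1, p 2. -/
noncomputable def bary (p : Fin 3 → Fin 2 → ℝ) (i : Fin 3) (x : Fin 2 → ℝ) : ℝ :=
  det2 (x - p (i + 1)) (x - p (i + 2)) / det2 (p i - p (i + 1)) (p i - p (i + 2))

/-- The constant gradient (linear part) Gᵢ of λᵢ. -/
noncomputable def baryG (p : Fin 3 → Fin 2 → ℝ) (i : Fin 3) (u : Fin 2 → ℝ) : ℝ :=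
  bary p i u - bary p i 0

lemma baryG_form (p : Fin 3 → Fin 2 → ℝ) (i : Fin 3) (x : Fin 2 → ℝ) :
    baryG p i x = (x 0 * (p (i+1) 1 - p (i+2) 1) - x 1 * (p (i+1) 0 - p (i+2) 0)) /
      ((p i 0 - p (i+1) 0) * (p i 1 - p (i+2) 1) - (p i 1 - p (i+1) 1) * (p i 0 - p (i+2) 0)) := by
  unfold baryG bary det2
  rw [div_sub_div_same]
  congr 1 <;> simp [Pi.sub_apply] <;> ring

lemma detne (p : Fin 3 → Fin 2 → ℝ) (hp : AffineIndependent ℝ p) :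
    (p 0 0 - p 1 0) * (p 0 1 - p 2 1) - (p 0 1 - p 1 1) * (p 0 0 - p 2 0) ≠ 0 := by
  intro h
  have hdet : (p 1 0 - p 0 0) * (p 2 1 - p 0 1) - (p 1 1 - p 0 1) * (p 2 0 - p 0 0) = 0 := by
    linear_combination h
  have key : ∀ c : ℝ, (c - 1) • p 0 + (-c) • p 1 + (1:ℝ) • p 2 = 0 → False := by
    intro c hc
    have := affineIndependent_iff.1 hp Finset.univ ![c - 1, -c, 1] (by
      simp [Fin.sum_univ_three]; ring) (by
      simpa [Fin.sum_univ_three] using hc) 2 (Finset.mem_univ _)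
    norm_num at this
    exact one_ne_zero this
  by_cases hv0 : p 1 0 - p 0 0 ≠ 0
  · apply key ((p 2 0 - p 0 0) / (p 1 0 - p 0 0))
    funext k
    fin_cases k <;> simp <;> field_simp <;> ring_nf <;> nlinarith [hdet, sq_nonneg (p 1 0 - p 0 0)]
  · by_cases hv1 : p 1 1 - p 0 1 ≠ 0
    · apply key ((p 2 1 - p 0 1) / (p 1 1 - p 0 1))
      funext k
      fin_cases k <;> simp <;> field_simp <;> ring_nf <;> nlinarith [hdet, sq_nonneg (p 1 1 - p 0 1)]
    · push_neg at hv0 hv1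
      have : p 1 = p 0 := by
        funext k; fin_cases k <;> simp <;> linarith
      exact absurd (hp.injective this) (by decide)

/-- For any α₁,α₂,α₃ there exist u₁,u₂,u₃ — namely uₙ = pₙ − ½(pₙ₊₁+pₙ₊₂) + (½+αₙ)(pₙ₊₁−pₙ₊₂) —
such that Gₙuₙ = 1 and the matrix [Gᵢuⱼ/Gⱼuⱼ] equals
[[1, −1−α₂, α₃],[α₁, 1, −1−α₃],[−1−α₁, α₂, 1]]. -/
theorem stmt13 (p : Fin 3 → Fin 2 → ℝ) (hp : AffineIndependent ℝ p) (α : Fin 3 → ℝ) :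
    ∃ u : Fin 3 → Fin 2 → ℝ,
      (∀ n, u n = p n - (1 / 2 : ℝ) • (p (n + 1) + p (n + 2)) +
        (1 / 2 + α n) • (p (n + 1) - p (n + 2))) ∧
      (∀ n, baryG p n (u n) = 1) ∧
      (∀ i j, baryG p i (u j) / baryG p j (u j) =
        !![(1 : ℝ), -1 - α 1, α 2; α 0, 1, -1 - α 2; -1 - α 0, α 1, 1] i j) := by
  have f01 : (0:Fin 3)+1 = 1 := by decide
  have f02 : (0:Fin 3)+2 = 2 := by decide
  have f11 : (1:Fin 3)+1 = 2 := by decide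
  have f12 : (1:Fin 3)+2 = 0 := by decide
  have f21 : (2:Fin 3)+1 = 0 := by decide
  have f22 : (2:Fin 3)+2 = 1 := by decide
  have hD0 := detne p hp
  have hD1 : (p 1 0 - p 2 0) * (p 1 1 - p 0 1) - (p 1 1 - p 2 1) * (p 1 0 - p 0 0) ≠ 0 :=
    fun h => detne p hp (by linear_combination h)
  have hD2 : (p 2 0 - p 0 0) * (p 2 1 - p 1 1) - (p 2 1 - p 0 1) * (p 2 0 - p 1 0) ≠ 0 :=
    fun h => detne p hp (by linear_combination h)
  set U : Fin 3 → Fin 2 → ℝ := fun n => p n - (1 / 2 : ℝ) • (p (n + 1) + p (n + 2)) +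
    (1 / 2 + α n) • (p (n + 1) - p (n + 2)) with hU
  have h00 : baryG p 0 (U 0) = 1 := by
    rw [hU, baryG_form]; simp only [f01, f02]; rw [div_eq_iff hD0]
    simp only [Pi.add_apply, Pi.sub_apply, Pi.smul_apply, smul_eq_mul, f01, f02]; ring
  have h10 : baryG p 1 (U 0) = α 0 := by
    rw [hU, baryG_form]; simp only [f01, f02, f11, f12]; rw [div_eq_iff hD1]
    simp only [Pi.add_apply, Pi.sub_apply, Pi.smul_apply, smul_eq_mul, f01, f02]; ring
  have h20 : baryG p 2 (U 0) = -1 - α 0 := by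
    rw [hU, baryG_form]; simp only [f01, f02, f21, f22]; rw [div_eq_iff hD2]
    simp only [Pi.add_apply, Pi.sub_apply, Pi.smul_apply, smul_eq_mul, f01, f02]; ring
  have h01 : baryG p 0 (U 1) = -1 - α 1 := by
    rw [hU, baryG_form]; simp only [f01, f02, f11, f12]; rw [div_eq_iff hD0]
    simp only [Pi.add_apply, Pi.sub_apply, Pi.smul_apply, smul_eq_mul, f11, f12]; ring
  have h11 : baryG p 1 (U 1) = 1 := by
    rw [hU, baryG_form]; simp only [f11, f12]; rw [div_eq_iff hD1]
    simp only [Pi.add_apply, Pi.sub_apply, Pi.smul_apply, smul_eq_mul, f11, f12]; ring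
  have h21 : baryG p 2 (U 1) = α 1 := by
    rw [hU, baryG_form]; simp only [f11, f12, f21, f22]; rw [div_eq_iff hD2]
    simp only [Pi.add_apply, Pi.sub_apply, Pi.smul_apply, smul_eq_mul, f11, f12]; ring
  have h02 : baryG p 0 (U 2) = α 2 := by
    rw [hU, baryG_form]; simp only [f01, f02, f21, f22]; rw [div_eq_iff hD0]
    simp only [Pi.add_apply, Pi.sub_apply, Pi.smul_apply, smul_eq_mul, f21, f22]; ring
  have h12 : baryG p 1 (U 2) = -1 - α 2 := by
    rw [hU, baryG_form]; simp only [f11, f12, f21, f22]; rw [div_eq_iff hD1]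
    simp only [Pi.add_apply, Pi.sub_apply, Pi.smul_apply, smul_eq_mul, f21, f22]; ring
  have h22 : baryG p 2 (U 2) = 1 := by
    rw [hU, baryG_form]; simp only [f21, f22]; rw [div_eq_iff hD2]
    simp only [Pi.add_apply, Pi.sub_apply, Pi.smul_apply, smul_eq_mul, f21, f22]; ring
  have h1 : ∀ n, baryG p n (U n) = 1 := by
    intro n; fin_cases n
    · exact h00
    · exact h11
    · exact h22
  refine ⟨U, fun n => rfl, h1, fun i j => ?_⟩
  rw [h1 j, div_one]
  fin_cases i <;> fin_cases j
  · exact h00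
  · exact h01
  · exact h02
  · exact h10
  · exact h11
  · exact h12
  · exact h20
  · exact h21
  · exact h22
end

section
/- Let (Ψ₀,Ψ₁) be an admissible pair of shape functions and let F₀(x) = Σₖ [Ψ₀(λₖ(x)) fₖ + Ψ₁(λₖ(x)) Aₖ(x − pₖ)] over a non-degenerate triangle. Then F₀(pᵢ) = fᵢ and F₀′(pᵢ) = Aᵢ for i = 1,2,3. -/
open Finset

lemma Fin.sum_univ_three_eq_add_add {M : Type*} [AddCommMonoid M] (g : Fin 3 → M) (i : Fin 3) :
    ∑ j, g j = g i + g (i + 1) + g (i + 2) := by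
  rw [← Equiv.sum_comp (Equiv.addLeft i) g, Fin.sum_univ_three]
  simp

lemma AffineIndependent.linearIndependent_pair_sub {𝕜 V : Type*} [Field 𝕜] [AddCommGroup V]
    [Module 𝕜 V] {p : Fin 3 → V} (hp : AffineIndependent 𝕜 p) (i : Fin 3) :
    LinearIndependent 𝕜 ![p i - p (i + 1), p i - p (i + 2)] := by
  rw [LinearIndependent.pair_iff]
  intro s t hst
  set w : Fin 3 → 𝕜 := fun j => ![s + t, -s, -t] (j - i)
  have hw₀ : w i = s + t := by simp [w]
  have hw₁ : w (i + 1) = -s := by simp [w]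
  have hw₂ : w (i + 2) = -t := by simp [w]
  have hzero := hp.eq_zero_of_sum_eq_zero (s := univ) (w := w)
    (by rw [Fin.sum_univ_three_eq_add_add _ i, hw₀, hw₁, hw₂]; ring)
    (by rw [Fin.sum_univ_three_eq_add_add _ i, hw₀, hw₁, hw₂, ← hst]; module)
  exact ⟨neg_eq_zero.mp (hw₁ ▸ hzero (i + 1) (mem_univ _)),
    neg_eq_zero.mp (hw₂ ▸ hzero (i + 2) (mem_univ _))⟩

lemma det2_ne_zero_of_linearIndependent {u v : Fin 2 → ℝ} (h : LinearIndependent ℝ ![u, v]) :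
    det2 u v ≠ 0 := by
  have hu : IsUnit (Matrix.of ![u, v]) := Matrix.linearIndependent_rows_iff_isUnit.mp h
  rw [Matrix.isUnit_iff_isUnit_det, isUnit_iff_ne_zero, Matrix.det_fin_two] at hu
  simpa [det2] using hu

lemma bary_self {p : Fin 3 → Fin 2 → ℝ} (hp : AffineIndependent ℝ p) (i : Fin 3) :
    bary p i (p i) = 1 :=
  div_self (det2_ne_zero_of_linearIndependent (hp.linearIndependent_pair_sub i))

lemma bary_of_ne (p : Fin 3 → Fin 2 → ℝ) {i k : Fin 3} (hk : k ≠ i) : bary p k (p i) = 0 := by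
  obtain rfl | rfl : i = k + 1 ∨ i = k + 2 := by omega
  all_goals simp [bary, det2]

lemma differentiable_bary (p : Fin 3 → Fin 2 → ℝ) (k : Fin 3) : Differentiable ℝ (bary p k) := by
  unfold bary det2
  fun_prop

section ShapeTerm

variable {E : Type*} [NormedAddCommGroup E] [NormedSpace ℝ E] {Ψ₀ Ψ₁ : ℝ → ℝ} {l : E → ℝ}
  {c : ℝ} {A : E →L[ℝ] ℝ} {q x₀ : E}

lemma hasFDerivAt_shape_term {l' : E →L[ℝ] ℝ} {d₀ d₁ : ℝ} (hl : HasFDerivAt l l' x₀)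
    (h₀ : HasDerivAt Ψ₀ d₀ (l x₀)) (h₁ : HasDerivAt Ψ₁ d₁ (l x₀)) :
    HasFDerivAt (fun x => Ψ₀ (l x) * c + Ψ₁ (l x) * A (x - q))
      ((d₀ * c + d₁ * A (x₀ - q)) • l' + Ψ₁ (l x₀) • A) x₀ := by
  have hA : HasFDerivAt (fun x => A (x - q)) A x₀ := (hasFDerivAt_comp_sub q).mpr A.hasFDerivAt
  refine (((h₀.comp_hasFDerivAt x₀ hl).mul_const c).add
    ((h₁.comp_hasFDerivAt x₀ hl).mul hA)).congr_fderiv ?_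
  ext v
  simp
  ring

lemma hasFDerivAt_shape_term_of_eq_zero (hl : DifferentiableAt ℝ l x₀) (hx₀ : l x₀ = 0)
    (h₀ : HasDerivAt Ψ₀ 0 0) (h₁ : HasDerivAt Ψ₁ 0 0) (h₁0 : Ψ₁ 0 = 0) :
    HasFDerivAt (fun x => Ψ₀ (l x) * c + Ψ₁ (l x) * A (x - q)) (0 : E →L[ℝ] ℝ) x₀ := by
  refine (hasFDerivAt_shape_term (d₀ := 0) (d₁ := 0) hl.hasFDerivAt (by rwa [hx₀])
    (by rwa [hx₀])).congr_fderiv ?_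
  simp [hx₀, h₁0]

lemma hasFDerivAt_shape_term_of_eq_one (hl : DifferentiableAt ℝ l x₀) (hx₀ : l x₀ = 1)
    (h₀ : HasDerivAt Ψ₀ 0 1) (h₁ : DifferentiableAt ℝ Ψ₁ 1) (h₁1 : Ψ₁ 1 = 1) :
    HasFDerivAt (fun x => Ψ₀ (l x) * c + Ψ₁ (l x) * A (x - x₀)) A x₀ := by
  refine (hasFDerivAt_shape_term (d₀ := 0) hl.hasFDerivAt (by rwa [hx₀])
    (by rw [hx₀]; exact h₁.hasDerivAt)).congr_fderiv ?_
  simp [hx₀, h₁1]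

end ShapeTerm

/-- For an admissible pair (Ψ₀,Ψ₁) of shape functions, the basic triangular interpolation
F₀(x) = Σₖ [Ψ₀(λₖ(x)) fₖ + Ψ₁(λₖ(x)) Aₖ(x − pₖ)] satisfies F₀(pᵢ) = fᵢ and F₀′(pᵢ) = Aᵢ. -/
theorem stmt15 (p : Fin 3 → Fin 2 → ℝ) (hp : AffineIndependent ℝ p)
    (Ψ₀ Ψ₁ : ℝ → ℝ) (hΨ₀ : ContDiff ℝ 1 Ψ₀) (hΨ₁ : ContDiff ℝ 1 Ψ₁)
    (h₀0 : Ψ₀ 0 = 0) (h₀d0 : deriv Ψ₀ 0 = 0) (h₁0 : Ψ₁ 0 = 0) (h₁d0 : deriv Ψ₁ 0 = 0)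
    (h₀d1 : deriv Ψ₀ 1 = 0) (h₀1 : Ψ₀ 1 = 1) (h₁1 : Ψ₁ 1 = 1)
    (f : Fin 3 → ℝ) (A : Fin 3 → (Fin 2 → ℝ) →L[ℝ] ℝ) (i : Fin 3) :
    (fun x => ∑ k, (Ψ₀ (bary p k x) * f k + Ψ₁ (bary p k x) * A k (x - p k))) (p i) = f i ∧
    fderiv ℝ (fun x => ∑ k, (Ψ₀ (bary p k x) * f k + Ψ₁ (bary p k x) * A k (x - p k))) (p i)
      = A i := by
  have hasDerivAt_of_deriv_eq {Ψ : ℝ → ℝ} (hΨ : ContDiff ℝ 1 Ψ) {t d : ℝ} (h : deriv Ψ t = d) :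
      HasDerivAt Ψ d t :=
    h ▸ (hΨ.differentiable one_ne_zero t).hasDerivAt
  have hterm : ∀ k, HasFDerivAt (fun x => Ψ₀ (bary p k x) * f k + Ψ₁ (bary p k x) * A k (x - p k))
      (if k = i then A i else 0) (p i) := by
    intro k
    split_ifs with hk
    · subst hk
      exact hasFDerivAt_shape_term_of_eq_one (differentiable_bary p k _) (bary_self hp k)
        (hasDerivAt_of_deriv_eq hΨ₀ h₀d1) (hΨ₁.differentiable one_ne_zero 1) h₁1
    · exact hasFDerivAt_shape_term_of_eq_zero (differentiable_bary p k _) (bary_of_ne p hk)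
        (hasDerivAt_of_deriv_eq hΨ₀ h₀d0)
        (hasDerivAt_of_deriv_eq hΨ₁ h₁d0) h₁0
  refine ⟨?_, ?_⟩
  · beta_reduce
    rw [sum_eq_single i (fun k _ hk => by simp [bary_of_ne p hk, h₀0, h₁0]) (by simp)]
    simp [bary_self hp, h₀1]
  · rw [(HasFDerivAt.fun_sum fun k _ => hterm k).fderiv, sum_ite_eq']
    simp
end

section
/- With admissible shape functions (Ψ₀,Ψ₁) and F₀ as the basic triangular interpolation, along the edge point x_t = t pᵢ + (1−t) pⱼ (0 ≤ t ≤ 1) one has F₀(x_t) = Ψ₀(t)fᵢ + Ψ₁(t)(1−t)Aᵢ(pⱼ−pᵢ) + Ψ₀(1−t)fⱼ + Ψ₁(1−t) t Aⱼ(pᵢ−pⱼ). -/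
theorem det2_eq_det (u v : Fin 2 → ℝ) : det2 u v = (Matrix.of ![u, v]).det := by
  simp [det2, Matrix.det_fin_two]

theorem linearIndependent_pair_iff_det2_ne_zero {u v : Fin 2 → ℝ} :
    LinearIndependent ℝ ![u, v] ↔ det2 u v ≠ 0 := by
  rw [det2_eq_det, ← isUnit_iff_ne_zero, ← Matrix.isUnit_iff_isUnit_det,
    ← Matrix.linearIndependent_rows_iff_isUnit]
  rfl

/-- `x ↦ det2 (x - a) (x - b)` is affine, since `det2 x x = 0` cancels its quadratic part. -/
theorem det2_sub_sub_segment (y z a b : Fin 2 → ℝ) (t : ℝ) :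
    det2 (t • y + (1 - t) • z - a) (t • y + (1 - t) • z - b) =
      t * det2 (y - a) (y - b) + (1 - t) * det2 (z - a) (z - b) := by
  simp only [det2, Pi.add_apply, Pi.sub_apply, Pi.smul_apply, smul_eq_mul]
  ring

theorem AffineIndependent.linearIndependent_sub_pair {k V : Type*} [Ring k] [AddCommGroup V]
    [Module k V] {q : Fin 3 → V} (hq : AffineIndependent k q) :
    LinearIndependent k ![q 0 - q 1, q 0 - q 2] := by
  refine LinearIndependent.pair_iff.2 fun s t hst => ?_
  have hw := affineIndependent_iff.1 hq Finset.univ ![s + t, -s, -t]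
    (by simp [Fin.sum_univ_three])
    (by simp only [Fin.sum_univ_three, ← hst]; simp [smul_sub, add_smul]; abel)
  exact ⟨neg_eq_zero.1 (hw 1 (by simp)), neg_eq_zero.1 (hw 2 (by simp))⟩

theorem det2_vertex_ne_zero {p : Fin 3 → Fin 2 → ℝ} (hp : AffineIndependent ℝ p) (i : Fin 3) :
    det2 (p i - p (i + 1)) (p i - p (i + 2)) ≠ 0 := by
  have hrot := (hp.comp_embedding (Equiv.addLeft i).toEmbedding).linearIndependent_sub_pair
  simpa [linearIndependent_pair_iff_det2_ne_zero] using hrot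

theorem bary_vertex {p : Fin 3 → Fin 2 → ℝ} (hp : AffineIndependent ℝ p) (m n : Fin 3) :
    bary p m (p n) = if n = m then 1 else 0 := by
  split_ifs with hnm
  · subst hnm
    exact div_self (det2_vertex_ne_zero hp n)
  · obtain rfl | rfl : n = m + 1 ∨ n = m + 2 := by revert m n; decide
    all_goals simp [bary, det2]

theorem bary_segment (p : Fin 3 → Fin 2 → ℝ) (m : Fin 3) (y z : Fin 2 → ℝ) (t : ℝ) :
    bary p m (t • y + (1 - t) • z) = t * bary p m y + (1 - t) * bary p m z := by
  simp only [bary, det2_sub_sub_segment, add_div, mul_div_assoc]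

theorem Fin.sum_univ_three_of_ne {M : Type*} [AddCommMonoid M] (g : Fin 3 → M) {i j k : Fin 3}
    (hij : i ≠ j) (hik : i ≠ k) (hjk : j ≠ k) : ∑ m, g m = g i + g j + g k := by
  have huniv : (Finset.univ : Finset (Fin 3)) = {i, j, k} := by revert i j k; decide
  rw [huniv, Finset.sum_insert (by simp [hij, hik]), Finset.sum_pair hjk, add_assoc]

theorem stmt16_general (p : Fin 3 → Fin 2 → ℝ) (hp : AffineIndependent ℝ p)
    (Ψ₀ Ψ₁ : ℝ → ℝ)
    (h₀0 : Ψ₀ 0 = 0) (h₁0 : Ψ₁ 0 = 0)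
    (f : Fin 3 → ℝ) (A : Fin 3 → (Fin 2 → ℝ) →L[ℝ] ℝ)
    (i j k : Fin 3) (hij : i ≠ j) (hik : i ≠ k) (hjk : j ≠ k)
    (t : ℝ) :
    (fun x => ∑ m, (Ψ₀ (bary p m x) * f m + Ψ₁ (bary p m x) * A m (x - p m)))
        (t • p i + (1 - t) • p j) =
      Ψ₀ t * f i + Ψ₁ t * (1 - t) * A i (p j - p i) +
        Ψ₀ (1 - t) * f j + Ψ₁ (1 - t) * t * A j (p i - p j) := by
  set x := t • p i + (1 - t) • p j
  have hbary (m : Fin 3) :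
      bary p m x = t * (if i = m then 1 else 0) + (1 - t) * (if j = m then 1 else 0) := by
    rw [bary_segment, bary_vertex hp, bary_vertex hp]
  have hi : bary p i x = t := by simp [hbary, hij.symm]
  have hj : bary p j x = 1 - t := by simp [hbary, hij]
  have hk : bary p k x = 0 := by simp [hbary, hik, hjk]
  have hxi : x - p i = (1 - t) • (p j - p i) := by module
  have hxj : x - p j = t • (p i - p j) := by module
  dsimp only
  rw [Fin.sum_univ_three_of_ne _ hij hik hjk, hi, hj, hk, hxi, hxj]
  simp only [h₀0, h₁0, map_smul, smul_eq_mul]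
  ring

/-- Along the edge point x_t = t pᵢ + (1−t) pⱼ, the basic interpolation F₀ satisfies
F₀(x_t) = Ψ₀(t)fᵢ + Ψ₁(t)(1−t)Aᵢ(pⱼ−pᵢ) + Ψ₀(1−t)fⱼ + Ψ₁(1−t)t Aⱼ(pᵢ−pⱼ). -/
theorem stmt16 (p : Fin 3 → Fin 2 → ℝ) (hp : AffineIndependent ℝ p)
    (Ψ₀ Ψ₁ : ℝ → ℝ) (hΨ₀ : ContDiff ℝ 1 Ψ₀) (hΨ₁ : ContDiff ℝ 1 Ψ₁)
    (h₀0 : Ψ₀ 0 = 0) (h₀d0 : deriv Ψ₀ 0 = 0) (h₁0 : Ψ₁ 0 = 0) (h₁d0 : deriv Ψ₁ 0 = 0)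
    (h₀d1 : deriv Ψ₀ 1 = 0) (h₀1 : Ψ₀ 1 = 1) (h₁1 : Ψ₁ 1 = 1)
    (f : Fin 3 → ℝ) (A : Fin 3 → (Fin 2 → ℝ) →L[ℝ] ℝ)
    (i j k : Fin 3) (hij : i ≠ j) (hik : i ≠ k) (hjk : j ≠ k)
    (t : ℝ) (ht : t ∈ Set.Icc (0 : ℝ) 1) :
    (fun x => ∑ m, (Ψ₀ (bary p m x) * f m + Ψ₁ (bary p m x) * A m (x - p m)))
        (t • p i + (1 - t) • p j) =
      Ψ₀ t * f i + Ψ₁ t * (1 - t) * A i (p j - p i) +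
        Ψ₀ (1 - t) * f j + Ψ₁ (1 - t) * t * A j (p i - p j) :=
  stmt16_general p hp Ψ₀ Ψ₁ h₀0 h₁0 f A i j k hij hik hjk t
end

section
/- If an RSD tuple [Ψ₀,Ψ₁,χ₀,χ₁] is affinity invariant, then Ψ₁ = Ψ₀ on [0,1], Ψ₀(t) + Ψ₀(1−t) = 1 for all t ∈ [0,1], and χ₀(t₁,t₂,t₃) = χ₁(t₁,t₂,t₃) + χ₁(t₂,t₁,t₃) for all (t₁,t₂,t₃) ∈ Δ₃. In particular, restricting to the edge t₃ = 0: if the interpolation of λ₁ reproduces λ₁ along the edge [p₁,p₂], then Ψ₁(t)+Ψ₁(1−t)=1 and Ψ₀(t)−Ψ₁(t) = 0 for t ∈ [0,1]. -/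
/-- The unit simplex Δ₃ ⊂ ℝ³. -/
def simplex3 : Set (Fin 3 → ℝ) := {t | (∀ i, 0 ≤ t i) ∧ ∑ i, t i = 1}

/-- The basic triangular interpolation F₀ of first order with shape functions Ψ₀, Ψ₁. -/
noncomputable def F0 (Ψ₀ Ψ₁ : ℝ → ℝ) (p : Fin 3 → Fin 2 → ℝ) (f : Fin 3 → ℝ)
    (A : Fin 3 → (Fin 2 → ℝ) →L[ℝ] ℝ) (x : Fin 2 → ℝ) : ℝ :=
  ∑ k, (Ψ₀ (bary p k x) * f k + Ψ₁ (bary p k x) * A k (x - p k))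

/-- The RSD correction term H of (1.3), summed over the six permutations (ℓ,m,n) of (1,2,3):
H(x) = Σ (Gℓuₙ/Gₙuₙ)·[fℓ·χ₀(λℓ,λm,λn) + Aℓ(pm−pℓ)·χ₁(λℓ,λm,λn)]. -/
noncomputable def Hcorr (χ₀ χ₁ : (Fin 3 → ℝ) → ℝ) (p : Fin 3 → Fin 2 → ℝ) (f : Fin 3 → ℝ)
    (A : Fin 3 → (Fin 2 → ℝ) →L[ℝ] ℝ) (u : Fin 3 → Fin 2 → ℝ) (x : Fin 2 → ℝ) : ℝ :=
  ∑ σ : Equiv.Perm (Fin 3),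
    (baryG p (σ 0) (u (σ 2)) / baryG p (σ 2) (u (σ 2))) *
      (f (σ 0) * χ₀ (fun q => bary p (σ q) x) +
        A (σ 0) (p (σ 1) - p (σ 0)) * χ₁ (fun q => bary p (σ q) x))

/-! On the edge `[p₁, p₂]` of the reference triangle every summand of `H` vanishes, so
reproducing `1` and `λ₁` there gives `Ψ₀(t) + Ψ₀(1-t) = 1` and
`Ψ₀(t) - (1-t) Ψ₁(t) + t Ψ₁(1-t) = t`. Inside the triangle, changing the direction `u₃`
changes only the two summands of `H` with `n = 3` and leaves `F₀` alone, so these summands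
agree; for `1` and `λ₁` this is `χ₀ = χ₁ + χ₁ ∘ (1 2)`. Differentiating that identity at
`(t, 1-t, 0)` in the inward direction `e₃ - e₁`, conditions (3.6) and (3.7) turn it into
`Ψ₀'(t) = (1-t) Ψ₁'(t) + t Ψ₁'(1-t)`; differentiating the edge identity then leaves
`Ψ₁(t) + Ψ₁(1-t) = 1`, and the edge identity becomes `Ψ₀ = Ψ₁`. -/

open Set

def AffinityInvariant (Ψ₀ Ψ₁ : ℝ → ℝ) (χ₀ χ₁ : (Fin 3 → ℝ) → ℝ) : Prop :=
  ∀ p : Fin 3 → Fin 2 → ℝ, AffineIndependent ℝ p →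
    ∀ u : Fin 3 → Fin 2 → ℝ, (∀ k, baryG p k (u k) ≠ 0) →
    ∀ (A : (Fin 2 → ℝ) →L[ℝ] ℝ) (b : ℝ), ∀ x ∈ convexHull ℝ (Set.range p),
      F0 Ψ₀ Ψ₁ p (fun k => A (p k) + b) (fun _ => A) x -
        Hcorr χ₀ χ₁ p (fun k => A (p k) + b) (fun _ => A) u x = A x + b

lemma vec3_mem_simplex3 {a b c : ℝ} :
    ![a, b, c] ∈ simplex3 ↔ 0 ≤ a ∧ 0 ≤ b ∧ 0 ≤ c ∧ a + b + c = 1 := by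
  simp [simplex3, Fin.forall_fin_succ, Fin.sum_univ_three, and_assoc]

lemma comp_perm_mem_simplex3 {t : Fin 3 → ℝ} (ht : t ∈ simplex3) (σ : Equiv.Perm (Fin 3)) :
    t ∘ σ ∈ simplex3 :=
  ⟨fun i => ht.1 (σ i), by rw [← ht.2]; exact Equiv.sum_comp σ t⟩

lemma comp_swap_zero_one (t : Fin 3 → ℝ) : t ∘ Equiv.swap 0 1 = ![t 1, t 0, t 2] := by
  funext i; fin_cases i <;> rfl

section Hcorr

variable (χ₀ χ₁ : (Fin 3 → ℝ) → ℝ) (p : Fin 3 → Fin 2 → ℝ) (f : Fin 3 → ℝ)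
  (A : Fin 3 → (Fin 2 → ℝ) →L[ℝ] ℝ) (x : Fin 2 → ℝ)

noncomputable def hcorrWeight (u : Fin 3 → Fin 2 → ℝ) (σ : Equiv.Perm (Fin 3)) : ℝ :=
  baryG p (σ 0) (u (σ 2)) / baryG p (σ 2) (u (σ 2))

noncomputable def hcorrTerm (σ : Equiv.Perm (Fin 3)) : ℝ :=
  f (σ 0) * χ₀ (fun q => bary p (σ q) x) +
    A (σ 0) (p (σ 1) - p (σ 0)) * χ₁ (fun q => bary p (σ q) x)

lemma Hcorr_eq_sum (u : Fin 3 → Fin 2 → ℝ) :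
    Hcorr χ₀ χ₁ p f A u x = ∑ σ, hcorrWeight p u σ * hcorrTerm χ₀ χ₁ p f A x σ :=
  rfl

lemma Hcorr_update_two_sub (u : Fin 3 → Fin 2 → ℝ) (v w : Fin 2 → ℝ) :
    Hcorr χ₀ χ₁ p f A (Function.update u 2 v) x - Hcorr χ₀ χ₁ p f A (Function.update u 2 w) x =
      (hcorrWeight p (Function.update u 2 v) 1 - hcorrWeight p (Function.update u 2 w) 1) *
          hcorrTerm χ₀ χ₁ p f A x 1 +
        (hcorrWeight p (Function.update u 2 v) (Equiv.swap 0 1) -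
            hcorrWeight p (Function.update u 2 w) (Equiv.swap 0 1)) *
          hcorrTerm χ₀ χ₁ p f A x (Equiv.swap 0 1) := by
  simp only [Hcorr_eq_sum, ← Finset.sum_sub_distrib, ← sub_mul]
  refine Fintype.sum_eq_add _ _ (by decide) fun σ hσ => ?_
  have hσ2 : σ 2 ≠ 2 := by revert σ; decide
  simp [hcorrWeight, Function.update_of_ne hσ2]

lemma Hcorr_eq_zero_of_bary_eq_zero
    (hedge : ∀ t ∈ simplex3, (t 0 = 0 ∨ t 1 = 0 ∨ t 2 = 0) → χ₀ t = 0 ∧ χ₁ t = 0)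
    (u : Fin 3 → Fin 2 → ℝ) (hx : (fun i => bary p i x) ∈ simplex3) {i : Fin 3}
    (hi : bary p i x = 0) : Hcorr χ₀ χ₁ p f A u x = 0 := by
  refine Finset.sum_eq_zero fun σ _ => ?_
  have hzero : ∃ j, bary p (σ j) x = 0 := ⟨σ⁻¹ i, by simpa using hi⟩
  obtain ⟨h₀, h₁⟩ := hedge _ (comp_perm_mem_simplex3 hx σ) (by
    obtain ⟨j, hj⟩ := hzero
    fin_cases j <;> simp_all)
  simp only [Function.comp_def] at h₀ h₁
  rw [h₀, h₁]; ring

end Hcorr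

section refTri

def refTri : Fin 3 → Fin 2 → ℝ := ![![0, 0], ![1, 0], ![0, 1]]

lemma bary_refTri_zero (x : Fin 2 → ℝ) : bary refTri 0 x = 1 - x 0 - x 1 := by
  simp [bary, det2, refTri, show (0 : Fin 3) + 2 = 2 from rfl]; ring

lemma bary_refTri_one (x : Fin 2 → ℝ) : bary refTri 1 x = x 0 := by
  simp [bary, det2, refTri, show (1 : Fin 3) + 1 = 2 from rfl, show (1 : Fin 3) + 2 = 0 from rfl]
  ring

lemma bary_refTri_two (x : Fin 2 → ℝ) : bary refTri 2 x = x 1 := by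
  simp [bary, det2, refTri, show (2 : Fin 3) + 1 = 0 from rfl, show (2 : Fin 3) + 2 = 1 from rfl]
  ring

lemma baryG_refTri_zero (u : Fin 2 → ℝ) : baryG refTri 0 u = -u 0 - u 1 := by
  simp [baryG, bary_refTri_zero]; ring

lemma baryG_refTri_one (u : Fin 2 → ℝ) : baryG refTri 1 u = u 0 := by
  simp [baryG, bary_refTri_one]

lemma baryG_refTri_two (u : Fin 2 → ℝ) : baryG refTri 2 u = u 1 := by
  simp [baryG, bary_refTri_two]

lemma affineIndependent_refTri : AffineIndependent ℝ refTri := by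
  rw [affineIndependent_iff_of_fintype]
  intro w hw hvsub i
  rw [Finset.weightedVSub_eq_weightedVSubOfPoint_of_sum_eq_zero _ _ _ hw 0] at hvsub
  have h₀ := congrFun hvsub 0
  have h₁ := congrFun hvsub 1
  simp [Finset.weightedVSubOfPoint_apply, Fin.sum_univ_three, refTri] at h₀ h₁ hw
  fin_cases i <;> simp <;> linarith

variable {t : Fin 3 → ℝ}

lemma bary_refTri_of_mem_simplex3 (ht : t ∈ simplex3) :
    (fun i => bary refTri i ![t 1, t 2]) = t := by
  have hsum : t 0 + t 1 + t 2 = 1 := by simpa [Fin.sum_univ_three] using ht.2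
  funext i
  fin_cases i
  · simp [bary_refTri_zero]; linarith
  · simp [bary_refTri_one]
  · simp [bary_refTri_two]

lemma mem_convexHull_refTri (ht : t ∈ simplex3) :
    ![t 1, t 2] ∈ convexHull ℝ (Set.range refTri) := by
  have : ![t 1, t 2] = Finset.univ.centerMass t refTri := by
    rw [Finset.centerMass_eq_of_sum_1 _ _ ht.2]
    funext j
    fin_cases j <;> simp [Fin.sum_univ_three, refTri]
  rw [this]
  exact Finset.centerMass_mem_convexHull _ (fun i _ => ht.1 i) (by rw [ht.2]; norm_num)
    (fun i _ => Set.mem_range_self i)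

end refTri

namespace AffinityInvariant

variable {Ψ₀ Ψ₁ : ℝ → ℝ} {χ₀ χ₁ : (Fin 3 → ℝ) → ℝ} {t : Fin 3 → ℝ}

lemma F0_refTri_edge (h : AffinityInvariant Ψ₀ Ψ₁ χ₀ χ₁)
    (hedge : ∀ t ∈ simplex3, (t 0 = 0 ∨ t 1 = 0 ∨ t 2 = 0) → χ₀ t = 0 ∧ χ₁ t = 0)
    {s : ℝ} (hs : s ∈ Icc 0 1) (A : (Fin 2 → ℝ) →L[ℝ] ℝ) (b : ℝ) :
    F0 Ψ₀ Ψ₁ refTri (fun k => A (refTri k) + b) (fun _ => A) ![s, 0] = A ![s, 0] + b := by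
  have ht : ![1 - s, s, 0] ∈ simplex3 :=
    vec3_mem_simplex3.2 ⟨by linarith [hs.2], hs.1, le_rfl, by ring⟩
  have hu : ∀ k, baryG refTri k ((fun _ => ![1, 1]) k) ≠ 0 := by
    norm_num [Fin.forall_fin_succ, baryG_refTri_zero, baryG_refTri_one, baryG_refTri_two]
  have hinv := h refTri affineIndependent_refTri _ hu A b _ (mem_convexHull_refTri ht)
  rwa [Hcorr_eq_zero_of_bary_eq_zero χ₀ χ₁ refTri _ _ _ hedge _
    (by rwa [bary_refTri_of_mem_simplex3 ht]) (i := 2) (by simp [bary_refTri_two]),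
    sub_zero] at hinv

lemma psi0_add_psi0_one_sub (h : AffinityInvariant Ψ₀ Ψ₁ χ₀ χ₁)
    (hedge : ∀ t ∈ simplex3, (t 0 = 0 ∨ t 1 = 0 ∨ t 2 = 0) → χ₀ t = 0 ∧ χ₁ t = 0)
    (h₀0 : Ψ₀ 0 = 0) {s : ℝ} (hs : s ∈ Icc 0 1) : Ψ₀ s + Ψ₀ (1 - s) = 1 := by
  have := h.F0_refTri_edge hedge hs 0 1
  simp only [F0, Fin.sum_univ_three, bary_refTri_zero, bary_refTri_one, bary_refTri_two] at this
  simp [h₀0] at this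
  linarith

lemma reproduces_bary_one_on_edge (h : AffinityInvariant Ψ₀ Ψ₁ χ₀ χ₁)
    (hedge : ∀ t ∈ simplex3, (t 0 = 0 ∨ t 1 = 0 ∨ t 2 = 0) → χ₀ t = 0 ∧ χ₁ t = 0)
    (h₀0 : Ψ₀ 0 = 0) (h₁0 : Ψ₁ 0 = 0) {s : ℝ} (hs : s ∈ Icc 0 1) :
    Ψ₀ s - (1 - s) * Ψ₁ s + s * Ψ₁ (1 - s) = s := by
  have := h.F0_refTri_edge hedge hs (ContinuousLinearMap.proj 0) 0
  simp only [F0, Fin.sum_univ_three, bary_refTri_zero, bary_refTri_one, bary_refTri_two] at this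
  simp [h₀0, h₁0, refTri] at this
  linear_combination this


/-- Changing `u₃` from `(0,1)` to `(-1,1)` leaves `F₀` unchanged, so the two summands of `H`
affected by it must agree. -/
lemma hcorrTerm_refTri_one_eq_swap (h : AffinityInvariant Ψ₀ Ψ₁ χ₀ χ₁) (ht : t ∈ simplex3)
    (A : (Fin 2 → ℝ) →L[ℝ] ℝ) (b : ℝ) :
    hcorrTerm χ₀ χ₁ refTri (fun k => A (refTri k) + b) (fun _ => A) ![t 1, t 2] 1 =
      hcorrTerm χ₀ χ₁ refTri (fun k => A (refTri k) + b) (fun _ => A) ![t 1, t 2]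
        (Equiv.swap 0 1) := by
  have hu : ∀ v : Fin 2 → ℝ, v 1 ≠ 0 →
      ∀ k, baryG refTri k (Function.update (fun _ => ![1, 1]) 2 v k) ≠ 0 := by
    intro v hv
    simp [Fin.forall_fin_succ, baryG_refTri_zero, baryG_refTri_one, baryG_refTri_two, hv]
    norm_num
  have hinv (v : Fin 2 → ℝ) (hv : v 1 ≠ 0) :=
    h refTri affineIndependent_refTri _ (hu v hv) A b _ (mem_convexHull_refTri ht)
  have hdiff := Hcorr_update_two_sub χ₀ χ₁ refTri (fun k => A (refTri k) + b) (fun _ => A)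
    ![t 1, t 2] (fun _ => ![1, 1]) ![0, 1] ![-1, 1]
  rw [show Hcorr χ₀ χ₁ refTri _ _ (Function.update (fun _ => ![1, 1]) 2 ![0, 1]) ![t 1, t 2] =
      Hcorr χ₀ χ₁ refTri _ _ (Function.update (fun _ => ![1, 1]) 2 ![-1, 1]) ![t 1, t 2] by
    linarith [hinv ![0, 1] (by simp), hinv ![-1, 1] (by simp)], sub_self] at hdiff
  have hswap₂ : Equiv.swap (0 : Fin 3) 1 2 = 2 := by decide
  simp [hcorrWeight, hswap₂, baryG_refTri_zero, baryG_refTri_one, baryG_refTri_two] at hdiff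
  linarith

lemma chi_zero_eq (h : AffinityInvariant Ψ₀ Ψ₁ χ₀ χ₁) (ht : t ∈ simplex3) :
    χ₀ t = χ₁ t + χ₁ ![t 1, t 0, t 2] := by
  have hbary := bary_refTri_of_mem_simplex3 ht
  have hswap : (fun q => bary refTri (Equiv.swap 0 1 q) ![t 1, t 2]) = ![t 1, t 0, t 2] :=
    (congrArg (· ∘ Equiv.swap 0 1) hbary).trans (comp_swap_zero_one t)
  have hconst := h.hcorrTerm_refTri_one_eq_swap ht 0 1
  have hlin := h.hcorrTerm_refTri_one_eq_swap ht (ContinuousLinearMap.proj 0) 0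
  simp only [hcorrTerm, Equiv.Perm.coe_one, id_eq, hswap, hbary] at hconst hlin
  simp [refTri] at hconst hlin
  linarith

end AffinityInvariant

lemma HasDerivAt.eq_zero_of_eqOn_Icc {F : Type*} [NormedAddCommGroup F] [NormedSpace ℝ F]
    {φ : ℝ → F} {d : F} {a b : ℝ} (hab : a < b) (hφ : HasDerivAt φ d a)
    (hzero : EqOn φ 0 (Icc a b)) : d = 0 :=
  (uniqueDiffOn_Icc hab a (left_mem_Icc.2 hab.le)).eq_deriv _ hφ.hasDerivWithinAt
    ((hasDerivWithinAt_const a _ 0).congr hzero (hzero (left_mem_Icc.2 hab.le)))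

/-- The identity `χ₀ = χ₁ + χ₁ ∘ swap` holds along the segment `(t - s, 1 - t, s)`, `0 ≤ s ≤ t`,
which lies in `simplex3`; differentiate it at `s = 0`. -/
lemma fderiv_inward_of_eq_add_swap {χ₀ χ₁ : (Fin 3 → ℝ) → ℝ}
    (hχ : ∀ z ∈ simplex3, χ₀ z = χ₁ z + χ₁ ![z 1, z 0, z 2]) {t : ℝ} (ht₀ : 0 < t) (ht₁ : t ≤ 1)
    (hd₀ : DifferentiableAt ℝ χ₀ ![t, 1 - t, 0]) (hd₁ : DifferentiableAt ℝ χ₁ ![t, 1 - t, 0])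
    (hd₁' : DifferentiableAt ℝ χ₁ ![1 - t, t, 0]) :
    fderiv ℝ χ₀ ![t, 1 - t, 0] (Pi.single 2 1) - fderiv ℝ χ₀ ![t, 1 - t, 0] (Pi.single 0 1) =
      fderiv ℝ χ₁ ![t, 1 - t, 0] (Pi.single 2 1) - fderiv ℝ χ₁ ![t, 1 - t, 0] (Pi.single 0 1) +
        (fderiv ℝ χ₁ ![1 - t, t, 0] (Pi.single 2 1) -
          fderiv ℝ χ₁ ![1 - t, t, 0] (Pi.single 1 1)) := by
  set v : Fin 3 → ℝ := Pi.single 2 1 - Pi.single 0 1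
  set v' : Fin 3 → ℝ := Pi.single 2 1 - Pi.single 1 1
  have hline (s : ℝ) : ![t, 1 - t, 0] + s • v = ![t - s, 1 - t, s] := by
    funext i; fin_cases i <;> simp [v, sub_eq_add_neg]
  have hline' (s : ℝ) : ![1 - t, t, 0] + s • v' = ![1 - t, t - s, s] := by
    funext i; fin_cases i <;> simp [v', sub_eq_add_neg]
  have hφ : HasDerivAt
      (fun s : ℝ => χ₀ (![t, 1 - t, 0] + s • v) - χ₁ (![t, 1 - t, 0] + s • v) -
        χ₁ (![1 - t, t, 0] + s • v'))
      (fderiv ℝ χ₀ ![t, 1 - t, 0] v - fderiv ℝ χ₁ ![t, 1 - t, 0] v -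
        fderiv ℝ χ₁ ![1 - t, t, 0] v') 0 :=
    ((hd₀.hasFDerivAt.hasLineDerivAt v).sub (hd₁.hasFDerivAt.hasLineDerivAt v)).sub
      (hd₁'.hasFDerivAt.hasLineDerivAt v')
  have hzero := hφ.eq_zero_of_eqOn_Icc ht₀ fun s hs => by
    have hs' : ![t - s, 1 - t, s] ∈ simplex3 :=
      vec3_mem_simplex3.2 ⟨by linarith [hs.2], by linarith, hs.1, by ring⟩
    simp only [hline, hline', Pi.zero_apply, hχ _ hs']
    simp
  simp only [v, v', map_sub] at hzero
  linarith

/-- Differentiate the edge identity: by `hderiv` the terms with derivatives of `Ψ₁` cancel. -/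
lemma add_apply_one_sub_eq_one_of_edge {Ψ₀ Ψ₁ : ℝ → ℝ} (hΨ₀ : Differentiable ℝ Ψ₀)
    (hΨ₁ : Differentiable ℝ Ψ₁)
    (hreprod : ∀ s ∈ Icc (0 : ℝ) 1, Ψ₀ s - (1 - s) * Ψ₁ s + s * Ψ₁ (1 - s) = s)
    {t : ℝ} (ht : t ∈ Ioo 0 1)
    (hderiv : deriv Ψ₀ t = (1 - t) * deriv Ψ₁ t + t * deriv Ψ₁ (1 - t)) :
    Ψ₁ t + Ψ₁ (1 - t) = 1 := by
  have hsub : HasDerivAt (fun s : ℝ => 1 - s) (-1) t := by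
    simpa using (hasDerivAt_id t).const_sub 1
  have hL : HasDerivAt (fun s => Ψ₀ s - (1 - s) * Ψ₁ s + s * Ψ₁ (1 - s))
      (deriv Ψ₀ t - (-1 * Ψ₁ t + (1 - t) * deriv Ψ₁ t) +
        (1 * Ψ₁ (1 - t) + t * (deriv Ψ₁ (1 - t) * -1))) t :=
    ((hΨ₀ t).hasDerivAt.sub (hsub.mul (hΨ₁ t).hasDerivAt)).add
      ((hasDerivAt_id t).mul ((hΨ₁ (1 - t)).hasDerivAt.comp t hsub))
  have hid : HasDerivAt (fun s => Ψ₀ s - (1 - s) * Ψ₁ s + s * Ψ₁ (1 - s)) 1 t :=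
    (hasDerivAt_id t).congr_of_eventuallyEq
      (Filter.eventually_of_mem (Icc_mem_nhds ht.1 ht.2) hreprod)
  linear_combination hL.unique hid - hderiv

lemma deriv_eq_of_marginal {Ψ₀ Ψ₁ : ℝ → ℝ} {χ₀ χ₁ : (Fin 3 → ℝ) → ℝ}
    (hχ : ∀ z ∈ simplex3, χ₀ z = χ₁ z + χ₁ ![z 1, z 0, z 2])
    (hd₀ : ∀ y ∈ simplex3, DifferentiableAt ℝ χ₀ y) (hd₁ : ∀ y ∈ simplex3, DifferentiableAt ℝ χ₁ y)
    (hD3 : ∀ t ∈ Set.Icc (0 : ℝ) 1,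
      fderiv ℝ χ₀ ![t, 1 - t, 0] (Pi.single 2 1) = deriv Ψ₀ t ∧
      fderiv ℝ χ₁ ![t, 1 - t, 0] (Pi.single 2 1) = deriv Ψ₁ t * (1 - t))
    (hmarg3 : ∀ t ∈ simplex3, t 2 = 0 →
      fderiv ℝ χ₀ t (Pi.single 0 1) = 0 ∧ fderiv ℝ χ₀ t (Pi.single 1 1) = 0 ∧
      fderiv ℝ χ₁ t (Pi.single 0 1) = 0 ∧ fderiv ℝ χ₁ t (Pi.single 1 1) = 0)
    {t : ℝ} (ht : t ∈ Ioo 0 1) :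
    deriv Ψ₀ t = (1 - t) * deriv Ψ₁ t + t * deriv Ψ₁ (1 - t) := by
  have hy : ![t, 1 - t, 0] ∈ simplex3 :=
    vec3_mem_simplex3.2 ⟨ht.1.le, by linarith [ht.2], le_rfl, by ring⟩
  have hy' : ![1 - t, t, 0] ∈ simplex3 :=
    vec3_mem_simplex3.2 ⟨by linarith [ht.2], ht.1.le, le_rfl, by ring⟩
  have hinward := fderiv_inward_of_eq_add_swap hχ ht.1 ht.2.le (hd₀ _ hy) (hd₁ _ hy) (hd₁ _ hy')
  obtain ⟨h₀e₀, -, h₁e₀, -⟩ := hmarg3 _ hy rfl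
  obtain ⟨-, -, -, h₁e₁'⟩ := hmarg3 _ hy' rfl
  obtain ⟨hD₀, hD₁⟩ := hD3 t (Ioo_subset_Icc_self ht)
  have hD₁' := (hD3 (1 - t) ⟨by linarith [ht.2], by linarith [ht.1]⟩).2
  rw [sub_sub_cancel] at hD₁'
  rw [h₀e₀, h₁e₀, h₁e₁', hD₀, hD₁, hD₁'] at hinward
  linear_combination hinward

theorem stmt17_general (Ψ₀ Ψ₁ : ℝ → ℝ) (χ₀ χ₁ : (Fin 3 → ℝ) → ℝ)
    -- (Ψ₀,Ψ₁) is an admissible pair of shape functions: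
    (hΨ₀ : ContDiff ℝ 1 Ψ₀) (hΨ₁ : ContDiff ℝ 1 Ψ₁)
    (h₀0 : Ψ₀ 0 = 0) (h₁0 : Ψ₁ 0 = 0)
    (h₁1 : Ψ₁ 1 = 1)
    -- χ₀, χ₁ are C¹ complementary shape functions on an open set Ω ⊇ Δ₃:
    (Ω : Set (Fin 3 → ℝ)) (hΩ : IsOpen Ω) (hΔΩ : simplex3 ⊆ Ω)
    (hχ₀ : ContDiffOn ℝ 1 χ₀ Ω) (hχ₁ : ContDiffOn ℝ 1 χ₁ Ω)
    -- χ₀, χ₁ vanish on the edges of Δ₃: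
    (hedge : ∀ t ∈ simplex3, (t 0 = 0 ∨ t 1 = 0 ∨ t 2 = 0) → χ₀ t = 0 ∧ χ₁ t = 0)
    -- condition (3.6): D₃χ₀(t,1−t,0) = Ψ₀′(t), D₃χ₁(t,1−t,0) = Ψ₁′(t)(1−t):
    (hD3 : ∀ t ∈ Set.Icc (0 : ℝ) 1,
      fderiv ℝ χ₀ ![t, 1 - t, 0] (Pi.single 2 1) = deriv Ψ₀ t ∧
      fderiv ℝ χ₁ ![t, 1 - t, 0] (Pi.single 2 1) = deriv Ψ₁ t * (1 - t))
    -- marginal conditions (3.7): χᵣ′ = 0 on Δ₃,₁ ∪ Δ₃,₂, and D₁χᵣ = D₂χᵣ = 0 on Δ₃,₃: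
    (hmarg3 : ∀ t ∈ simplex3, t 2 = 0 →
      fderiv ℝ χ₀ t (Pi.single 0 1) = 0 ∧ fderiv ℝ χ₀ t (Pi.single 1 1) = 0 ∧
      fderiv ℝ χ₁ t (Pi.single 0 1) = 0 ∧ fderiv ℝ χ₁ t (Pi.single 1 1) = 0)
    -- affinity invariance of the interpolation operator 𝔉 = F₀ − H:
    (hinv : ∀ p : Fin 3 → Fin 2 → ℝ, AffineIndependent ℝ p →
      ∀ u : Fin 3 → Fin 2 → ℝ, (∀ k, baryG p k (u k) ≠ 0) →
      ∀ (A : (Fin 2 → ℝ) →L[ℝ] ℝ) (b : ℝ), ∀ x ∈ convexHull ℝ (Set.range p),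
        F0 Ψ₀ Ψ₁ p (fun k => A (p k) + b) (fun _ => A) x -
          Hcorr χ₀ χ₁ p (fun k => A (p k) + b) (fun _ => A) u x = A x + b) :
    (∀ t ∈ Set.Icc (0 : ℝ) 1, Ψ₁ t = Ψ₀ t) ∧
    (∀ t ∈ Set.Icc (0 : ℝ) 1, Ψ₀ t + Ψ₀ (1 - t) = 1) ∧
    (∀ t ∈ simplex3, χ₀ t = χ₁ t + χ₁ ![t 1, t 0, t 2]) ∧
    (∀ t ∈ Set.Icc (0 : ℝ) 1, Ψ₁ t + Ψ₁ (1 - t) = 1 ∧ Ψ₀ t - Ψ₁ t = 0) := by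
  have hinv : AffinityInvariant Ψ₀ Ψ₁ χ₀ χ₁ := hinv
  have hχ (t) (ht : t ∈ simplex3) := hinv.chi_zero_eq ht
  have hreprod (s) (hs : s ∈ Icc (0 : ℝ) 1) := hinv.reproduces_bary_one_on_edge hedge h₀0 h₁0 hs
  have hdiff {χ : (Fin 3 → ℝ) → ℝ} (hχ : ContDiffOn ℝ 1 χ Ω) (y) (hy : y ∈ simplex3) :
      DifferentiableAt ℝ χ y :=
    (hχ.contDiffAt (hΩ.mem_nhds (hΔΩ hy))).differentiableAt one_ne_zero
  have hsum₁ : ∀ t ∈ Icc (0 : ℝ) 1, Ψ₁ t + Ψ₁ (1 - t) = 1 := by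
    intro t ht
    rcases ht.1.eq_or_lt with rfl | ht₀
    · simp [h₁0, h₁1]
    rcases ht.2.eq_or_lt with rfl | ht₁
    · simp [h₁0, h₁1]
    exact add_apply_one_sub_eq_one_of_edge (hΨ₀.differentiable one_ne_zero)
      (hΨ₁.differentiable one_ne_zero) hreprod ⟨ht₀, ht₁⟩
      (deriv_eq_of_marginal hχ (hdiff hχ₀) (hdiff hχ₁) hD3 hmarg3 ⟨ht₀, ht₁⟩)
  have heq (t) (ht : t ∈ Icc (0 : ℝ) 1) : Ψ₁ t = Ψ₀ t := by
    linear_combination -hreprod t ht + t * hsum₁ t ht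
  exact ⟨heq, fun t ht => hinv.psi0_add_psi0_one_sub hedge h₀0 ht, hχ,
    fun t ht => ⟨hsum₁ t ht, by rw [heq t ht, sub_self]⟩⟩

/-- If an RSD tuple [Ψ₀,Ψ₁,χ₀,χ₁] is affinity invariant (the interpolation operator
𝔉 : germ ↦ F₀ − H reproduces every affine function x ↦ A x + b over every admissible
pair (P,U)), then Ψ₁ = Ψ₀ on [0,1], Ψ₀(t) + Ψ₀(1−t) = 1 on [0,1], and
χ₀(t₁,t₂,t₃) = χ₁(t₁,t₂,t₃) + χ₁(t₂,t₁,t₃) on Δ₃; in particular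
Ψ₁(t) + Ψ₁(1−t) = 1 and Ψ₀(t) − Ψ₁(t) = 0 on [0,1]. -/
theorem stmt17 (Ψ₀ Ψ₁ : ℝ → ℝ) (χ₀ χ₁ : (Fin 3 → ℝ) → ℝ)
    -- (Ψ₀,Ψ₁) is an admissible pair of shape functions:
    (hΨ₀ : ContDiff ℝ 1 Ψ₀) (hΨ₁ : ContDiff ℝ 1 Ψ₁)
    (h₀0 : Ψ₀ 0 = 0) (h₀d0 : deriv Ψ₀ 0 = 0) (h₁0 : Ψ₁ 0 = 0) (h₁d0 : deriv Ψ₁ 0 = 0)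
    (h₀d1 : deriv Ψ₀ 1 = 0) (h₀1 : Ψ₀ 1 = 1) (h₁1 : Ψ₁ 1 = 1)
    -- χ₀, χ₁ are C¹ complementary shape functions on an open set Ω ⊇ Δ₃:
    (Ω : Set (Fin 3 → ℝ)) (hΩ : IsOpen Ω) (hΔΩ : simplex3 ⊆ Ω)
    (hχ₀ : ContDiffOn ℝ 1 χ₀ Ω) (hχ₁ : ContDiffOn ℝ 1 χ₁ Ω)
    -- χ₀, χ₁ vanish on the edges of Δ₃:
    (hedge : ∀ t ∈ simplex3, (t 0 = 0 ∨ t 1 = 0 ∨ t 2 = 0) → χ₀ t = 0 ∧ χ₁ t = 0)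
    -- condition (3.6): D₃χ₀(t,1−t,0) = Ψ₀′(t), D₃χ₁(t,1−t,0) = Ψ₁′(t)(1−t):
    (hD3 : ∀ t ∈ Set.Icc (0 : ℝ) 1,
      fderiv ℝ χ₀ ![t, 1 - t, 0] (Pi.single 2 1) = deriv Ψ₀ t ∧
      fderiv ℝ χ₁ ![t, 1 - t, 0] (Pi.single 2 1) = deriv Ψ₁ t * (1 - t))
    -- marginal conditions (3.7): χᵣ′ = 0 on Δ₃,₁ ∪ Δ₃,₂, and D₁χᵣ = D₂χᵣ = 0 on Δ₃,₃:
    (hmarg12 : ∀ t ∈ simplex3, (t 0 = 0 ∨ t 1 = 0) →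
      fderiv ℝ χ₀ t = 0 ∧ fderiv ℝ χ₁ t = 0)
    (hmarg3 : ∀ t ∈ simplex3, t 2 = 0 →
      fderiv ℝ χ₀ t (Pi.single 0 1) = 0 ∧ fderiv ℝ χ₀ t (Pi.single 1 1) = 0 ∧
      fderiv ℝ χ₁ t (Pi.single 0 1) = 0 ∧ fderiv ℝ χ₁ t (Pi.single 1 1) = 0)
    -- affinity invariance of the interpolation operator 𝔉 = F₀ − H:
    (hinv : ∀ p : Fin 3 → Fin 2 → ℝ, AffineIndependent ℝ p →
      ∀ u : Fin 3 → Fin 2 → ℝ, (∀ k, baryG p k (u k) ≠ 0) →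
      ∀ (A : (Fin 2 → ℝ) →L[ℝ] ℝ) (b : ℝ), ∀ x ∈ convexHull ℝ (Set.range p),
        F0 Ψ₀ Ψ₁ p (fun k => A (p k) + b) (fun _ => A) x -
          Hcorr χ₀ χ₁ p (fun k => A (p k) + b) (fun _ => A) u x = A x + b) :
    (∀ t ∈ Set.Icc (0 : ℝ) 1, Ψ₁ t = Ψ₀ t) ∧
    (∀ t ∈ Set.Icc (0 : ℝ) 1, Ψ₀ t + Ψ₀ (1 - t) = 1) ∧
    (∀ t ∈ simplex3, χ₀ t = χ₁ t + χ₁ ![t 1, t 0, t 2]) ∧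
    (∀ t ∈ Set.Icc (0 : ℝ) 1, Ψ₁ t + Ψ₁ (1 - t) = 1 ∧ Ψ₀ t - Ψ₁ t = 0) :=
  stmt17_general Ψ₀ Ψ₁ χ₀ χ₁ hΨ₀ hΨ₁ h₀0 h₁0 h₁1 Ω hΩ hΔΩ hχ₀ hχ₁ hedge hD3 hmarg3 hinv
end
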